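/- Let n ≥ 3 be an integer, ε > 0 and a ∈ ℝ^{n-1}. Then the boundary trace of the standard bubble satisfies ∫_{ℝ^{n-1}} U_{ε,a}(ȳ, 0)^{2(n-1)/(n-2)} dȳ = K_n^{-2(n-1)} = ((n-2)/2)^{n-1} σ_{n-1}; in particular this integral is finite and independent of ε and a. -/

import Mathlib

open MeasureTheory Real

/-- The last coordinate `y_n` of a point `y ∈ ℝ^n`. -/
noncomputable def lastCoord (n : ℕ) (y : EuclideanSpace ℝ (Fin n)) : ℝ :=
  if h : 0 < n then y ⟨n - 1, Nat.sub_lt h one_pos⟩ else 0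

/-- The embedding `ℝ^{n-1} × ℝ → ℝ^n`, `(x, t) ↦ (x, t)`. -/
noncomputable def emb (n : ℕ) (x : EuclideanSpace ℝ (Fin (n - 1))) (t : ℝ) :
    EuclideanSpace ℝ (Fin n) :=
  (EuclideanSpace.equiv (Fin n) ℝ).symm
    (fun i => if h : (i : ℕ) < n - 1 then x ⟨i, h⟩ else t)

/-- The area `σ_{n-1}` of the unit `(n-1)`-sphere in `ℝ^n`. -/
noncomputable def sphereArea (n : ℕ) : ℝ :=
  n * (volume (Metric.ball (0 : EuclideanSpace ℝ (Fin n)) 1)).toReal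

/-- The sharp Sobolev trace constant `K_n`. -/
noncomputable def Kconst (n : ℕ) : ℝ :=
  (((n : ℝ) - 2) / 2) ^ (-(1 : ℝ) / 2) * sphereArea n ^ (-(1 : ℝ) / (2 * ((n : ℝ) - 1)))

/-- The standard bubble `U_{ε,a}`. -/
noncomputable def bubble (n : ℕ) (ε : ℝ) (a : EuclideanSpace ℝ (Fin (n - 1)))
    (y : EuclideanSpace ℝ (Fin n)) : ℝ :=
  (ε / ((lastCoord n y + ε / ((n : ℝ) - 2)) ^ 2 +
      ∑ i : Fin (n - 1), (y (Fin.castLE (Nat.sub_le n 1) i) - a i) ^ 2)) ^ (((n : ℝ) - 2) / 2)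

/-- The Euclidean Laplacian `Δu(y) = ∑ ∂²u/∂y_i²(y)`. -/
noncomputable def lap (n : ℕ) (u : EuclideanSpace ℝ (Fin n) → ℝ)
    (y : EuclideanSpace ℝ (Fin n)) : ℝ :=
  ∑ i : Fin n, iteratedDeriv 2 (fun t : ℝ => u (y + t • EuclideanSpace.single i (1 : ℝ))) 0



lemma sinPowInt (k : ℕ) :
    ∫ x in (0:ℝ)..π, Real.sin x ^ k
      = √π * Real.Gamma (((k : ℝ) + 1) / 2) / Real.Gamma ((k : ℝ) / 2 + 1) := by
  induction k using Nat.twoStepInduction with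
  | zero =>
    have h0 : ∫ x in (0:ℝ)..π, Real.sin x ^ 0 = π := by simp
    rw [h0]
    norm_num
    rw [Real.Gamma_one_half_eq, Real.mul_self_sqrt pi_pos.le]
  | one =>
    have h0 : ∫ x in (0:ℝ)..π, Real.sin x ^ 1 = 2 := by
      simp only [pow_one, integral_sin, Real.cos_zero, Real.cos_pi]; norm_num
    have h : Real.Gamma ((1 : ℝ) / 2 + 1) = (1 / 2) * Real.Gamma (1 / 2) :=
      Real.Gamma_add_one (by norm_num)
    rw [h0]
    push_cast
    rw [(by norm_num : ((1:ℝ) + 1) / 2 = 1), Real.Gamma_one, h, Real.Gamma_one_half_eq]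
    have : (0:ℝ) < √π := Real.sqrt_pos.2 pi_pos
    field_simp
  | more k ih _ =>
    have h1 : Real.sin (0:ℝ) ^ (k+1) * Real.cos 0 - Real.sin π ^ (k+1) * Real.cos π = 0 := by
      simp
    rw [integral_sin_pow k, h1, ih]
    set A := Real.Gamma (((k:ℝ) + 1) / 2) with hA
    set B := Real.Gamma ((k:ℝ) / 2 + 1) with hB
    have hΓ1 : (0:ℝ) < A := Real.Gamma_pos_of_pos (by positivity)
    have hΓ2 : (0:ℝ) < B := Real.Gamma_pos_of_pos (by positivity)
    have e1 : ((↑(k+2) : ℝ) + 1) / 2 = ((k:ℝ) + 1) / 2 + 1 := by push_cast; ring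
    have e2 : ((↑(k+2) : ℝ)) / 2 + 1 = ((k:ℝ) / 2 + 1) + 1 := by push_cast; ring
    have g1 : Real.Gamma ((((k:ℝ) + 1) / 2) + 1) = (((k:ℝ) + 1) / 2) * A :=
      Real.Gamma_add_one (by positivity)
    have g2 : Real.Gamma (((k:ℝ) / 2 + 1) + 1) = ((k:ℝ) / 2 + 1) * B :=
      Real.Gamma_add_one (by positivity)
    rw [e1, e2, g1, g2]
    have hk2 : ((k:ℝ) + 2) ≠ 0 := by positivity
    have hk2' : ((k:ℝ) / 2 + 1) ≠ 0 := by positivity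
    push_cast
    field_simp
    ring

lemma J_eval (k : ℕ) :
    ∫ r in Set.Ioi (0:ℝ), r ^ k * ((1 + r ^ 2)⁻¹) ^ (k + 1)
      = (2:ℝ)⁻¹ ^ (k + 1) * ∫ x in (0:ℝ)..π, Real.sin x ^ k := by
  have himg : Real.tan '' Set.Ioo 0 (π/2) = Set.Ioi (0:ℝ) := by
    ext y
    constructor
    · rintro ⟨θ, ⟨h0, h1⟩, rfl⟩
      exact Real.tan_pos_of_pos_of_lt_pi_div_two h0 h1
    · intro hy
      refine ⟨Real.arctan y, ⟨?_, Real.arctan_lt_pi_div_two y⟩, Real.tan_arctan y⟩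
      rw [← Real.arctan_zero]
      exact Real.arctan_strictMono hy
  have hsub : Set.Ioo (0:ℝ) (π/2) ⊆ Set.Ioo (-(π/2)) (π/2) := by
    intro x hx
    exact ⟨lt_of_lt_of_le (neg_neg_iff_pos.2 (by positivity)) hx.1.le, hx.2⟩
  have hcos : ∀ θ ∈ Set.Ioo (0:ℝ) (π/2), 0 < Real.cos θ := fun θ hθ =>
    Real.cos_pos_of_mem_Ioo (hsub hθ)
  have hderiv : ∀ θ ∈ Set.Ioo (0:ℝ) (π/2),
      HasDerivWithinAt Real.tan (1 / Real.cos θ ^ 2) (Set.Ioo 0 (π/2)) θ :=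
    fun θ hθ => (Real.hasDerivAt_tan (hcos θ hθ).ne').hasDerivWithinAt
  have hinj : Set.InjOn Real.tan (Set.Ioo 0 (π/2)) := Real.injOn_tan.mono hsub
  calc ∫ r in Set.Ioi (0:ℝ), r ^ k * ((1 + r ^ 2)⁻¹) ^ (k + 1)
      = ∫ θ in Set.Ioo (0:ℝ) (π/2), |1 / Real.cos θ ^ 2| •
          (Real.tan θ ^ k * ((1 + Real.tan θ ^ 2)⁻¹) ^ (k + 1)) := by
        rw [← himg,
          integral_image_eq_integral_abs_deriv_smul measurableSet_Ioo hderiv hinj]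
    _ = ∫ θ in Set.Ioo (0:ℝ) (π/2), (2:ℝ)⁻¹ ^ k * Real.sin (2 * θ) ^ k := by
        apply setIntegral_congr_fun measurableSet_Ioo
        intro θ hθ
        dsimp only
        have hc := hcos θ hθ
        have h1 : (1 + Real.tan θ ^ 2)⁻¹ = Real.cos θ ^ 2 :=
          Real.inv_one_add_tan_sq hc.ne'
        rw [h1, Real.tan_eq_sin_div_cos, smul_eq_mul, abs_of_pos (by positivity)]
        rw [Real.sin_two_mul]
        have hc0 := hc.ne'
        field_simp
        have e : (Real.sin θ / Real.cos θ) ^ k * Real.cos θ ^ k = Real.sin θ ^ k := by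
          rw [← mul_pow, div_mul_cancel₀ _ hc0]
        have h2 : ((1:ℝ) / 2) ^ k * 2 ^ k = 1 := by rw [← mul_pow]; norm_num
        linear_combination (Real.cos θ ^ k * Real.cos θ ^ 2) * e
          - (Real.cos θ ^ 2 * Real.cos θ ^ k * Real.sin θ ^ k) * h2
    _ = (2:ℝ)⁻¹ ^ k * ∫ θ in Set.Ioo (0:ℝ) (π/2), Real.sin (2 * θ) ^ k := by
        rw [integral_const_mul]
    _ = (2:ℝ)⁻¹ ^ (k+1) * ∫ x in (0:ℝ)..π, Real.sin x ^ k := by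
        have : ∫ θ in Set.Ioo (0:ℝ) (π/2), Real.sin (2 * θ) ^ k
            = ∫ θ in (0:ℝ)..(π/2), Real.sin (2 * θ) ^ k := by
          rw [intervalIntegral.integral_of_le (by positivity),
            integral_Ioc_eq_integral_Ioo]
        rw [this, intervalIntegral.integral_comp_mul_left (fun x => Real.sin x ^ k)
          (two_ne_zero)]
        norm_num
        ring
lemma ball_toReal (m : ℕ) (hm : 1 ≤ m) :
    (volume (Metric.ball (0 : EuclideanSpace ℝ (Fin m)) 1)).toReal
      = √π ^ m / Real.Gamma ((m:ℝ) / 2 + 1) := by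
  haveI : Nonempty (Fin m) := ⟨⟨0, by omega⟩⟩
  rw [EuclideanSpace.volume_ball]
  have hΓ : 0 < Real.Gamma ((m:ℝ) / 2 + 1) := Real.Gamma_pos_of_pos (by positivity)
  simp [Fintype.card_fin, ENNReal.toReal_ofReal, div_nonneg (by positivity : (0:ℝ) ≤ √π ^ m) hΓ.le]

lemma I_eval (n : ℕ) (hn : 3 ≤ n) :
    ∫ x : EuclideanSpace ℝ (Fin (n - 1)), ((1 + ‖x‖ ^ 2)⁻¹) ^ (n - 1)
      = (2:ℝ)⁻¹ ^ (n - 1) * sphereArea n := by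
  obtain ⟨k, hk⟩ : ∃ k, n - 1 = k + 1 := ⟨n - 2, by omega⟩
  haveI : Nontrivial (EuclideanSpace ℝ (Fin (n - 1))) := by
    haveI : Nonempty (Fin (n-1)) := ⟨⟨0, by omega⟩⟩
    infer_instance
  rw [integral_fun_norm_addHaar (volume : Measure (EuclideanSpace ℝ (Fin (n-1))))
    (fun y => ((1 + y ^ 2)⁻¹) ^ (n - 1))]
  rw [finrank_euclideanSpace_fin]
  have h1 : ∫ y in Set.Ioi (0:ℝ), y ^ (n - 1 - 1) • ((1 + y ^ 2)⁻¹) ^ (n - 1)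
      = (2:ℝ)⁻¹ ^ (k + 1) * ∫ x in (0:ℝ)..π, Real.sin x ^ k := by
    rw [← J_eval k]
    apply setIntegral_congr_fun measurableSet_Ioi
    intro y _
    simp [hk]
  rw [h1, sinPowInt k, measureReal_def, ball_toReal (n-1) (by omega), sphereArea,
    ball_toReal n (by omega), nsmul_eq_mul, smul_eq_mul]
  have hkr : ((k:ℝ)) = (n:ℝ) - 2 := by
    have : (((n:ℕ) - 1 : ℕ) : ℝ) = (k:ℝ) + 1 := by rw [hk]; push_cast; ring
    have h2 : (((n:ℕ) - 1 : ℕ) : ℝ) = (n:ℝ) - 1 := by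
      rw [Nat.cast_sub (by omega)]; norm_num
    linarith
  have hnr1 : (((n:ℕ) - 1 : ℕ) : ℝ) = (n:ℝ) - 1 := by
    rw [Nat.cast_sub (by omega)]; norm_num
  rw [hkr, hnr1, hk]
  set r : ℝ := (n:ℝ) with hr
  have hr3 : (3:ℝ) ≤ r := by rw [hr]; exact_mod_cast hn
  -- Gamma identities
  have e1 : ((r - 2) + 1) / 2 = (r-1)/2 := by ring
  have e2 : (r - 2) / 2 + 1 = r / 2 := by ring
  have g1 : Real.Gamma ((r-1)/2 + 1) = ((r-1)/2) * Real.Gamma ((r-1)/2) :=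
    Real.Gamma_add_one (ne_of_gt (by linarith))
  have g2 : Real.Gamma (r/2 + 1) = (r/2) * Real.Gamma (r/2) :=
    Real.Gamma_add_one (ne_of_gt (by linarith))
  have hΓ1 : 0 < Real.Gamma ((r-1)/2) := Real.Gamma_pos_of_pos (by linarith)
  have hΓ2 : 0 < Real.Gamma (r/2) := Real.Gamma_pos_of_pos (by linarith)
  rw [e1, e2, g1, g2]
  have hpow : (√π : ℝ) ^ n = √π ^ (k+1) * √π := by
    rw [← pow_succ]
    congr 1
    omega
  rw [hpow]
  have hsq : (0:ℝ) < √π := Real.sqrt_pos.2 pi_pos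
  have hc : ((k+1 : ℕ):ℝ) = r - 1 := by push_cast; rw [hkr]; ring

  have hne1 : Real.Gamma ((r-1)/2) ≠ 0 := ne_of_gt hΓ1
  have hne2 : Real.Gamma (r/2) ≠ 0 := ne_of_gt hΓ2
  have h3 : r - 1 ≠ 0 := by linarith
  have h4 : r ≠ 0 := by linarith
  field_simp

/-- the boundary trace of the standard bubble satisfies
`∫_{ℝ^{n-1}} U_{ε,a}(ȳ,0)^{2(n-1)/(n-2)} dȳ = K_n^{-2(n-1)} = ((n-2)/2)^{n-1} σ_{n-1}`;
in particular the integral is finite and independent of `ε` and `a`. -/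
theorem bubble_boundary_integral (n : ℕ) (hn : 3 ≤ n) (ε : ℝ) (hε : 0 < ε)
    (a : EuclideanSpace ℝ (Fin (n - 1))) :
    (∫ x : EuclideanSpace ℝ (Fin (n - 1)),
        bubble n ε a (emb n x 0) ^ (2 * ((n : ℝ) - 1) / ((n : ℝ) - 2)))
      = Kconst n ^ (-(2 : ℝ) * ((n : ℝ) - 1)) ∧
    Kconst n ^ (-(2 : ℝ) * ((n : ℝ) - 1)) = (((n : ℝ) - 2) / 2) ^ (n - 1) * sphereArea n ∧
    Integrable (fun x : EuclideanSpace ℝ (Fin (n - 1)) =>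
      bubble n ε a (emb n x 0) ^ (2 * ((n : ℝ) - 1) / ((n : ℝ) - 2))) := by
  have hn2 : (0:ℝ) < (n:ℝ) - 2 := by
    have : (3:ℝ) ≤ (n:ℝ) := by exact_mod_cast hn
    linarith
  have hn1 : (0:ℝ) < (n:ℝ) - 1 := by linarith
  have hmr : ((n - 1 : ℕ):ℝ) = (n:ℝ) - 1 := by
    rw [Nat.cast_sub (by omega)]; norm_num
  set c : ℝ := ε / ((n:ℝ) - 2) with hcdef
  have hc : 0 < c := div_pos hε hn2
  set g : EuclideanSpace ℝ (Fin (n-1)) → ℝ :=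
    fun v => (ε / (c ^ 2 + ‖v‖ ^ 2)) ^ (n-1) with hgdef
  -- pointwise identity
  have hA : ∀ x : EuclideanSpace ℝ (Fin (n-1)),
      bubble n ε a (emb n x 0) ^ (2 * ((n : ℝ) - 1) / ((n : ℝ) - 2)) = g (x - a) := by
    intro x
    have hlast : lastCoord n (emb n x 0) = 0 := by
      have hn0 : 0 < n := by omega
      simp only [lastCoord, dif_pos hn0, emb]
      have h2 : ¬ ((n - 1 : ℕ) < n - 1) := lt_irrefl _
      simp [EuclideanSpace.equiv, h2]
    have hcoord : ∀ i : Fin (n-1), emb n x 0 (Fin.castLE (Nat.sub_le n 1) i) = x i := by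
      intro i
      simp only [emb]
      have h : ((Fin.castLE (Nat.sub_le n 1) i : Fin n) : ℕ) < n - 1 := i.2
      simp [EuclideanSpace.equiv, dif_pos h]
    have hsum : ∑ i : Fin (n-1), (emb n x 0 (Fin.castLE (Nat.sub_le n 1) i) - a i) ^ 2
        = ‖x - a‖ ^ 2 := by
      rw [EuclideanSpace.norm_eq, Real.sq_sqrt (by positivity)]
      refine Finset.sum_congr rfl fun i _ => ?_
      rw [hcoord i]
      simp [PiLp.sub_apply]
    have hD : (0:ℝ) < c ^ 2 + ‖x - a‖ ^ 2 := by positivity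
    have hbase : (0:ℝ) ≤ ε / (c ^ 2 + ‖x - a‖ ^ 2) := by positivity
    simp only [bubble, hlast, zero_add, hsum]
    rw [← hcdef]
    rw [← Real.rpow_mul hbase]
    have hexp : ((n:ℝ) - 2) / 2 * (2 * ((n : ℝ) - 1) / ((n : ℝ) - 2)) = ((n - 1 : ℕ):ℝ) := by
      rw [hmr]; field_simp
    rw [hexp, Real.rpow_natCast]
  -- positivity of sphereArea
  have hvol : (0:ℝ) < (volume (Metric.ball (0 : EuclideanSpace ℝ (Fin n)) 1)).toReal := by
    refine ENNReal.toReal_pos (ne_of_gt (Metric.measure_ball_pos volume 0 one_pos))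
      measure_ball_lt_top.ne
  have hS : 0 < sphereArea n := by
    have : (0:ℝ) < (n:ℝ) := by linarith
    exact mul_pos this hvol
  have hb2 : (0:ℝ) < ((n:ℝ) - 2) / 2 := by linarith
  -- the second conjunct
  have conj2 : Kconst n ^ (-(2 : ℝ) * ((n : ℝ) - 1))
      = (((n : ℝ) - 2) / 2) ^ (n - 1) * sphereArea n := by
    have hA0 : (0:ℝ) ≤ (((n:ℝ) - 2) / 2) ^ (-(1 : ℝ) / 2) := Real.rpow_nonneg hb2.le _
    have hB0 : (0:ℝ) ≤ sphereArea n ^ (-(1 : ℝ) / (2 * ((n : ℝ) - 1))) :=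
      Real.rpow_nonneg hS.le _
    rw [Kconst, Real.mul_rpow hA0 hB0, ← Real.rpow_mul hb2.le, ← Real.rpow_mul hS.le]
    have e1 : -(1 : ℝ) / 2 * (-(2 : ℝ) * ((n : ℝ) - 1)) = ((n - 1 : ℕ):ℝ) := by
      rw [hmr]; ring
    have e2 : -(1 : ℝ) / (2 * ((n : ℝ) - 1)) * (-(2 : ℝ) * ((n : ℝ) - 1)) = 1 := by
      field_simp
    rw [e1, e2, Real.rpow_one, Real.rpow_natCast]
  -- integrability of g
  have hgc : Continuous g := by
    apply Continuous.pow
    exact continuous_const.div (by continuity) (fun v => ne_of_gt (by positivity))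
  have hInt1 : Integrable (fun x : EuclideanSpace ℝ (Fin (n-1)) =>
      ((1:ℝ) + ‖x‖ ^ 2) ^ (-(2 * ((n-1:ℕ):ℝ)) / 2)) := by
    apply integrable_rpow_neg_one_add_norm_sq
    rw [finrank_euclideanSpace_fin]
    have : (1:ℝ) ≤ ((n-1:ℕ):ℝ) := by
      have : 1 ≤ n - 1 := by omega
      exact_mod_cast this
    linarith
  have hIntg : Integrable g := by
    set K : ℝ := max 1 (c⁻¹ ^ 2) with hK
    have hK1 : (1:ℝ) ≤ K := le_max_left _ _
    have hKc : c⁻¹ ^ 2 ≤ K := le_max_right _ _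
    refine ((hInt1.const_mul ((ε * K) ^ (n-1))).mono' hgc.aestronglyMeasurable ?_)
    filter_upwards with v
    have ht : (0:ℝ) ≤ ‖v‖ ^ 2 := by positivity
    have hrw : ((1:ℝ) + ‖v‖ ^ 2) ^ (-(2 * ((n-1:ℕ):ℝ)) / 2) = ((1 + ‖v‖ ^ 2)⁻¹) ^ (n-1) := by
      have h1 : (0:ℝ) < 1 + ‖v‖ ^ 2 := by positivity
      rw [show (-(2 * ((n-1:ℕ):ℝ)) / 2) = -((n - 1 : ℕ):ℝ) by push_cast; ring,
        Real.rpow_neg h1.le, Real.rpow_natCast, ← inv_pow]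
    rw [hrw]
    have hgv : (0:ℝ) ≤ g v := by positivity
    rw [Real.norm_of_nonneg hgv]
    have hle : ε / (c ^ 2 + ‖v‖ ^ 2) ≤ ε * K * (1 + ‖v‖ ^ 2)⁻¹ := by
      rw [div_le_iff₀ (by positivity)]
      have key : 1 + ‖v‖ ^ 2 ≤ K * (c ^ 2 + ‖v‖ ^ 2) := by
        have h1 : (1:ℝ) ≤ K * c ^ 2 := by
          have := mul_le_mul_of_nonneg_right hKc (le_of_lt (by positivity : (0:ℝ) < c ^ 2))
          calc (1:ℝ) = c⁻¹ ^ 2 * c ^ 2 := by field_simp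
          _ ≤ K * c ^ 2 := by nlinarith [sq_nonneg c]
        nlinarith [mul_le_mul_of_nonneg_right hK1 ht]
      calc ε = ε * (1 + ‖v‖ ^ 2) * (1 + ‖v‖ ^ 2)⁻¹ := by field_simp
      _ ≤ ε * (K * (c ^ 2 + ‖v‖ ^ 2)) * (1 + ‖v‖ ^ 2)⁻¹ := by
          apply mul_le_mul_of_nonneg_right _ (by positivity)
          exact mul_le_mul_of_nonneg_left key hε.le
      _ = ε * K * (1 + ‖v‖ ^ 2)⁻¹ * (c ^ 2 + ‖v‖ ^ 2) := by ring
    calc g v = (ε / (c ^ 2 + ‖v‖ ^ 2)) ^ (n-1) := rfl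
    _ ≤ (ε * K * (1 + ‖v‖ ^ 2)⁻¹) ^ (n-1) := by
        apply pow_le_pow_left₀ (by positivity) hle
    _ = (ε * K) ^ (n-1) * ((1 + ‖v‖ ^ 2)⁻¹) ^ (n-1) := by rw [mul_pow]
  -- value of ∫ g
  have hval : ∫ v, g v = (((n:ℝ) - 2) / 2) ^ (n-1) * sphereArea n := by
    have hcs := MeasureTheory.Measure.integral_comp_smul
      (volume : Measure (EuclideanSpace ℝ (Fin (n-1)))) g c
    rw [finrank_euclideanSpace_fin] at hcs
    have hgsc : ∀ x : EuclideanSpace ℝ (Fin (n-1)),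
        g (c • x) = (ε / c ^ 2) ^ (n-1) * ((1 + ‖x‖ ^ 2)⁻¹) ^ (n-1) := by
      intro x
      have h1 : (0:ℝ) < 1 + ‖x‖ ^ 2 := by positivity
      simp only [hgdef, norm_smul, Real.norm_of_nonneg hc.le]
      rw [← mul_pow]
      congr 1
      rw [show c ^ 2 + (c * ‖x‖) ^ 2 = c ^ 2 * (1 + ‖x‖ ^ 2) by ring]
      field_simp
    simp only [hgsc] at hcs
    rw [integral_const_mul, I_eval n hn, smul_eq_mul] at hcs
    have habs : |((c ^ (n-1) : ℝ))⁻¹| = (c ^ (n-1))⁻¹ := by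
      rw [abs_of_pos]; positivity
    rw [habs] at hcs
    have hcm : (0:ℝ) < c ^ (n-1) := by positivity
    have : ∫ v, g v = c ^ (n-1) * ((ε / c ^ 2) ^ (n-1) * ((2:ℝ)⁻¹ ^ (n - 1) * sphereArea n)) := by
      rw [hcs]; field_simp
    rw [this]
    have hcc : c ^ (n-1) * (ε / c ^ 2) ^ (n-1) = ((n:ℝ) - 2) ^ (n-1) := by
      rw [← mul_pow]
      congr 1
      rw [hcdef]
      field_simp
    calc c ^ (n-1) * ((ε / c ^ 2) ^ (n-1) * ((2:ℝ)⁻¹ ^ (n-1) * sphereArea n))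
        = (c ^ (n-1) * (ε / c ^ 2) ^ (n-1)) * ((2:ℝ)⁻¹ ^ (n-1) * sphereArea n) := by ring
    _ = ((n:ℝ) - 2) ^ (n-1) * ((2:ℝ)⁻¹ ^ (n-1) * sphereArea n) := by rw [hcc]
    _ = (((n:ℝ) - 2) / 2) ^ (n-1) * sphereArea n := by
        rw [div_pow, inv_pow]
        ring
  refine ⟨?_, conj2, ?_⟩
  · rw [conj2]
    calc ∫ x, bubble n ε a (emb n x 0) ^ (2 * ((n : ℝ) - 1) / ((n : ℝ) - 2))
        = ∫ x, g (x - a) := by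
          congr 1; funext x; exact hA x
    _ = ∫ v, g v := integral_sub_right_eq_self g a
    _ = (((n : ℝ) - 2) / 2) ^ (n-1) * sphereArea n := hval
  · have : (fun x : EuclideanSpace ℝ (Fin (n-1)) =>
        bubble n ε a (emb n x 0) ^ (2 * ((n : ℝ) - 1) / ((n : ℝ) - 2)))
        = fun x => g (x - a) := funext hA
    rw [this]
    exact hIntg.comp_sub_right a
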